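/- arXiv:2010.11023 — 2 statements merged into one kernel-verified Lean document; each statement's English description precedes it below -/
import Mathlib

section
/- Let G = (V, E_G) be the d-dimensional grid graph with side lengths (n₁, …, n_d), and for any two non-adjacent vertices E, F let G' = (V, E_G ∪ {e}) be the grid with the extra edge e = (E,F). Then β(G') ≤ 2d + 2, and moreover β(G') ≥ log(N_Π) / log(N_Σ − d + 1), where N_Σ = n₁ + ⋯ + n_d and N_Π = n₁ ⋯ n_d. -/
/-- A set `R` of vertices resolves the graph `H` if every pair of distinct
vertices is distinguished by some vertex of `R`. -/
def resolves {V : Type*} (H : SimpleGraph V) (R : Set V) : Prop :=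
  ∀ a b : V, a ≠ b → ∃ x ∈ R, H.dist a x ≠ H.dist b x

/-- The metric dimension: the least cardinality of a (finite) resolving set. -/
noncomputable def metricDim {V : Type*} (H : SimpleGraph V) : ℕ :=
  sInf {k | ∃ R : Finset V, R.card = k ∧ resolves H (R : Set V)}

/-- The `d`-dimensional grid graph with side lengths `n 0, …, n (d-1)`: vertices are
tuples `(x 0, …, x (d-1))` with `x i ∈ Fin (n i)` (representing the coordinate
`x i + 1 ∈ {1, …, n i}`), two vertices being adjacent when they differ by exactly 1
in exactly one coordinate, i.e. when their ℓ¹ distance is 1. -/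
def gridGraph {d : ℕ} (n : Fin d → ℕ) : SimpleGraph (∀ i, Fin (n i)) where
  Adj x y := (∑ i, |((x i : ℕ) : ℤ) - ((y i : ℕ) : ℤ)|) = 1
  symm := by
    constructor
    intro x y h
    rw [show (∑ i, |((y i : ℕ) : ℤ) - ((x i : ℕ) : ℤ)|)
        = ∑ i, |((x i : ℕ) : ℤ) - ((y i : ℕ) : ℤ)| from
      Finset.sum_congr rfl fun i _ => abs_sub_comm _ _]
    exact h
  loopless := by constructor; intro x h; simp at h

/-!
Adding the edge `EF` to a connected graph changes the distance from `u` to `v` into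
`min (d u v) (min (d u E + 1 + d F v) (d u F + 1 + d E v))`. In the grid the corners `C_S` and
`C_Sᶜ` are antipodal (`d u C_S + d u C_Sᶜ` is the diameter for every `u`), and for such a pair the
new edge cannot shorten both distances at once; this is enough for the distances to both to
determine the grid distance `d u C_S`. For `S = ∅` and `S = {j}` these are `∑ i, u i` and
`∑ i, u i - 2 u j + n j - 1`, so the `2d + 2` corners resolve the graph. For the lower bound, a
resolving set of size `k` embeds the `N_Π` vertices into `{0, …, D}^k`, where `D = N_Σ - d`
bounds all distances.
-/

namespace SimpleGraph

variable {V : Type*} {G : SimpleGraph V}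

lemma Walk.le_length_add {f : V → ℕ} (hf : ∀ a b, G.Adj a b → f a ≤ f b + 1) {u v : V} :
    ∀ p : G.Walk u v, f u ≤ f v + p.length
  | .nil => by simp
  | .cons h p => by have := hf _ _ h; have := p.le_length_add hf; simp only [length_cons]; omega

lemma Reachable.le_dist {f : V → ℕ} (hf : ∀ a b, G.Adj a b → f a ≤ f b + 1) {u v : V}
    (hv : f v = 0) (h : G.Reachable u v) : f u ≤ G.dist u v := by
  obtain ⟨p, hp⟩ := h.exists_walk_length_eq_dist
  simpa [hv, hp] using p.le_length_add hf

lemma Connected.dist_le_dist_add_one (hG : G.Connected) {a b : V} (hab : G.Adj a b) (x : V) :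
    G.dist a x ≤ G.dist b x + 1 := by
  have := hG.dist_triangle (u := a) (v := b) (w := x)
  rw [dist_eq_one_iff_adj.mpr hab] at this
  omega

theorem Connected.dist_sup_fromEdgeSet (hG : G.Connected) (E F u v : V) :
    (G ⊔ fromEdgeSet {s(E, F)}).dist u v =
      min (G.dist u v) (min (G.dist u E + 1 + G.dist F v) (G.dist u F + 1 + G.dist E v)) := by
  set G' := G ⊔ fromEdgeSet {s(E, F)}
  have hG' : G'.Connected := hG.mono le_sup_left
  have hdist (x y : V) : G'.dist x y ≤ G.dist x y := by
    obtain ⟨p, hp⟩ := hG.exists_walk_length_eq_dist x y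
    simpa [hp] using dist_le (p.mapLe (le_sup_left : G ≤ G'))
  have hEF : G'.dist E F ≤ 1 := by
    by_cases h : E = F
    · simp [h]
    · exact (dist_eq_one_iff_adj.mpr (by simp [G', h])).le
  have hFE : G'.dist F E ≤ 1 := dist_comm (G := G') ▸ hEF
  refine le_antisymm ?_ ?_
  · have := hG'.dist_triangle (u := u) (v := E) (w := v)
    have := hG'.dist_triangle (u := E) (v := F) (w := v)
    have := hG'.dist_triangle (u := u) (v := F) (w := v)
    have := hG'.dist_triangle (u := F) (v := E) (w := v)
    have := hdist u v; have := hdist u E; have := hdist F v; have := hdist u F; have := hdist E v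
    omega
  · refine (hG'.preconnected u v).le_dist
      (f := fun u =>
        min (G.dist u v) (min (G.dist u E + 1 + G.dist F v) (G.dist u F + 1 + G.dist E v)))
      (fun a b hab => ?_) (by simp)
    rcases hab with hab | ⟨hab, -⟩
    · have := hG.dist_le_dist_add_one hab v
      have := hG.dist_le_dist_add_one hab E
      have := hG.dist_le_dist_add_one hab F
      omega
    · have := dist_comm (G := G) (u := E) (v := F)
      rcases Sym2.eq_iff.mp hab with ⟨rfl, rfl⟩ | ⟨rfl, rfl⟩ <;> simp only [dist_self] <;> omega

/-- With `φ = G.dist · X`, the new distances to `X` and `Y` are `min φ (shortcuts)` and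
`G.dist X Y - max φ (shortcuts)`; since `φ` is 1-Lipschitz, no vertex can use the new edge to
shorten both distances. -/
theorem Connected.dist_eq_of_sup_fromEdgeSet {X Y : V} (hG : G.Connected)
    (hXY : ∀ u, G.dist u X + G.dist u Y = G.dist X Y) {E F a b : V}
    (hX : (G ⊔ fromEdgeSet {s(E, F)}).dist a X = (G ⊔ fromEdgeSet {s(E, F)}).dist b X)
    (hY : (G ⊔ fromEdgeSet {s(E, F)}).dist a Y = (G ⊔ fromEdgeSet {s(E, F)}).dist b Y) :
    G.dist a X = G.dist b X := by
  rw [hG.dist_sup_fromEdgeSet, hG.dist_sup_fromEdgeSet] at hX hY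
  have tri (u w : V) :
      G.dist u X ≤ G.dist u w + G.dist w X ∧ G.dist w X ≤ G.dist u w + G.dist u X :=
    ⟨hG.dist_triangle, dist_comm (G := G) (u := u) ▸ hG.dist_triangle⟩
  have := tri a E; have := tri a F; have := tri b E; have := tri b F
  have := hXY a; have := hXY b; have := hXY E; have := hXY F
  have := dist_comm (G := G) (u := E) (v := X); have := dist_comm (G := G) (u := F) (v := X)
  have := dist_comm (G := G) (u := E) (v := Y); have := dist_comm (G := G) (u := F) (v := Y)
  omega

end SimpleGraph

section MetricDimension

variable {V : Type*} {H : SimpleGraph V}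

lemma metricDim_le_card {R : Finset V} (hR : resolves H R) : metricDim H ≤ R.card :=
  Nat.sInf_le ⟨R, rfl, hR⟩

lemma SimpleGraph.Connected.resolves_univ (hH : H.Connected) : resolves H Set.univ :=
  fun a b hab => ⟨a, trivial, by
    rw [SimpleGraph.dist_self, ne_comm, Ne, (hH b a).dist_eq_zero_iff]
    exact Ne.symm hab⟩

lemma card_le_pow_metricDim [Fintype V] (hH : H.Connected) {D : ℕ}
    (hD : ∀ u v, H.dist u v ≤ D) : Fintype.card V ≤ (D + 1) ^ metricDim H := by
  classical
  obtain ⟨R, hRcard, hR⟩ : metricDim H ∈ {k | ∃ R : Finset V, R.card = k ∧ resolves H R} :=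
    Nat.sInf_mem ⟨_, Finset.univ, rfl, by simpa using hH.resolves_univ⟩
  let code : V → R → Fin (D + 1) := fun v x => ⟨H.dist v x, Nat.lt_succ_of_le (hD v x)⟩
  have hcode : Function.Injective code := by
    intro a b hab
    by_contra hne
    obtain ⟨x, hx, hdist⟩ := hR a b hne
    exact hdist (congrArg Fin.val (congrFun hab ⟨x, hx⟩))
  simpa [hRcard] using Fintype.card_le_of_injective code hcode

end MetricDimension

lemma Real.log_div_log_le_of_le_pow {a b k : ℕ} (h : a ≤ b ^ k) :
    Real.log a / Real.log b ≤ k := by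
  refine div_le_of_le_mul₀ (Real.log_natCast_nonneg b) k.cast_nonneg ?_
  rcases Nat.eq_zero_or_pos a with rfl | ha
  · simp [mul_nonneg k.cast_nonneg (Real.log_natCast_nonneg b)]
  · rw [← Real.log_pow]
    exact Real.log_le_log (by exact_mod_cast ha) (by exact_mod_cast h)

section Grid

open Finset

variable {d : ℕ} {n : Fin d → ℕ}

def l1Dist (u v : ∀ i, Fin (n i)) : ℕ := ∑ i, (((u i : ℕ) : ℤ) - ((v i : ℕ) : ℤ)).natAbs

lemma cast_l1Dist (u v : ∀ i, Fin (n i)) :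
    (l1Dist u v : ℤ) = ∑ i, |((u i : ℕ) : ℤ) - ((v i : ℕ) : ℤ)| := by
  simp [l1Dist]

lemma gridGraph_adj_iff {u v : ∀ i, Fin (n i)} : (gridGraph n).Adj u v ↔ l1Dist u v = 1 := by
  change _ = _ ↔ _
  rw [← cast_l1Dist]
  exact_mod_cast Iff.rfl

@[simp]
lemma l1Dist_self (u : ∀ i, Fin (n i)) : l1Dist u u = 0 := by simp [l1Dist]

lemma l1Dist_comm (u v : ∀ i, Fin (n i)) : l1Dist u v = l1Dist v u :=
  sum_congr rfl fun i _ => by omega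

lemma l1Dist_triangle (u v w : ∀ i, Fin (n i)) : l1Dist u w ≤ l1Dist u v + l1Dist v w := by
  rw [l1Dist, l1Dist, l1Dist, ← sum_add_distrib]
  exact sum_le_sum fun i _ => by omega

lemma eq_of_l1Dist_eq_zero {u v : ∀ i, Fin (n i)} (h : l1Dist u v = 0) : u = v :=
  funext fun i => Fin.ext <| by have := (sum_eq_zero_iff.mp h) i (mem_univ i); omega

lemma l1Dist_le (u v : ∀ i, Fin (n i)) : l1Dist u v ≤ ∑ i, (n i - 1) :=
  sum_le_sum fun i _ => by have := (u i).isLt; have := (v i).isLt; omega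

lemma l1Dist_update_left (u v : ∀ i, Fin (n i)) (i : Fin d) (c : Fin (n i)) :
    l1Dist (Function.update u i c) v + (((u i : ℕ) : ℤ) - ((v i : ℕ) : ℤ)).natAbs =
      l1Dist u v + (((c : ℕ) : ℤ) - ((v i : ℕ) : ℤ)).natAbs := by
  rw [l1Dist, l1Dist, ← add_sum_erase _ _ (mem_univ i), ← add_sum_erase _ _ (mem_univ i),
    sum_congr rfl fun j hj => by rw [Function.update_of_ne (ne_of_mem_erase hj)],
    Function.update_self]
  ring

lemma exists_adj_l1Dist_add_one {u v : ∀ i, Fin (n i)} (huv : u ≠ v) :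
    ∃ w, (gridGraph n).Adj u w ∧ l1Dist w v + 1 = l1Dist u v := by
  obtain ⟨i, hi⟩ := Function.ne_iff.mp huv
  have hi : (u i : ℕ) ≠ v i := Fin.val_ne_of_ne hi
  have := (u i).isLt
  have := (v i).isLt
  let c : Fin (n i) :=
    ⟨if (u i : ℕ) < v i then (u i : ℕ) + 1 else (u i : ℕ) - 1, by split <;> omega⟩
  have hc : (c : ℕ) = if (u i : ℕ) < v i then (u i : ℕ) + 1 else (u i : ℕ) - 1 := rfl
  have hstep := l1Dist_update_left u v i c
  have hadj := l1Dist_update_left u u i c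
  rw [l1Dist_self, l1Dist_comm] at hadj
  refine ⟨Function.update u i c, gridGraph_adj_iff.mpr ?_, ?_⟩ <;> split_ifs at hc <;> omega

lemma exists_gridGraph_walk_length_eq_l1Dist (u v : ∀ i, Fin (n i)) :
    ∃ p : (gridGraph n).Walk u v, p.length = l1Dist u v := by
  induction hk : l1Dist u v generalizing u with
  | zero =>
    obtain rfl := eq_of_l1Dist_eq_zero hk
    exact ⟨.nil, rfl⟩
  | succ k ih =>
    obtain ⟨w, huw, hw⟩ := exists_adj_l1Dist_add_one (u := u) (v := v) (by rintro rfl; simp at hk)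
    obtain ⟨p, hp⟩ := ih w (by omega)
    exact ⟨.cons huw p, by simp [hp]⟩

lemma gridGraph_dist_eq (u v : ∀ i, Fin (n i)) : (gridGraph n).dist u v = l1Dist u v := by
  obtain ⟨p, hp⟩ := exists_gridGraph_walk_length_eq_l1Dist u v
  refine le_antisymm (hp ▸ SimpleGraph.dist_le p) (SimpleGraph.Reachable.le_dist
    (f := fun u => l1Dist u v) (fun a b hab => ?_) (l1Dist_self v) ⟨p⟩)
  have := l1Dist_triangle a b v
  rw [gridGraph_adj_iff.mp hab] at this
  omega

lemma gridGraph_connected [Nonempty (∀ i, Fin (n i))] : (gridGraph n).Connected where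
  preconnected u v := ⟨(exists_gridGraph_walk_length_eq_l1Dist u v).choose⟩

variable [∀ i, NeZero (n i)]

def gridCorner (S : Finset (Fin d)) : ∀ i, Fin (n i) := fun i => if i ∈ S then Fin.rev 0 else 0

lemma val_gridCorner (S : Finset (Fin d)) (i : Fin d) :
    ((gridCorner S : ∀ i, Fin (n i)) i : ℕ) = if i ∈ S then n i - 1 else 0 := by
  unfold gridCorner
  split <;> simp [Fin.val_rev]

lemma l1Dist_gridCorner_add_compl (u : ∀ i, Fin (n i)) (S : Finset (Fin d)) :
    l1Dist u (gridCorner S) + l1Dist u (gridCorner Sᶜ) = ∑ i, (n i - 1) := by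
  rw [l1Dist, l1Dist, ← sum_add_distrib]
  refine sum_congr rfl fun i _ => ?_
  have := (u i).isLt
  by_cases hi : i ∈ S <;> simp [val_gridCorner, hi] <;> omega

lemma l1Dist_gridCorner_compl (S : Finset (Fin d)) :
    l1Dist (gridCorner S) (gridCorner Sᶜ : ∀ i, Fin (n i)) = ∑ i, (n i - 1) := by
  simpa using l1Dist_gridCorner_add_compl (gridCorner S) S

lemma l1Dist_gridCorner_empty (u : ∀ i, Fin (n i)) : l1Dist u (gridCorner ∅) = ∑ i, (u i : ℕ) :=
  sum_congr rfl fun i _ => by simp [val_gridCorner]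

lemma l1Dist_gridCorner_singleton (u : ∀ i, Fin (n i)) (j : Fin d) :
    l1Dist u (gridCorner {j}) + 2 * u j = ∑ i, (u i : ℕ) + (n j - 1) := by
  rw [l1Dist, ← add_sum_erase _ _ (mem_univ j), ← add_sum_erase _ _ (mem_univ j),
    sum_congr rfl fun i hi => show _ = (u i : ℕ) by
      simp [val_gridCorner, ne_of_mem_erase hi]]
  have := (u j).isLt
  simp only [val_gridCorner, mem_singleton, if_true]
  omega

variable (d) in
def cornerIndexSets : Finset (Finset (Fin d)) := insert ∅ (univ.image singleton)

variable (n) in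
def gridCorners : Finset (∀ i, Fin (n i)) :=
  (cornerIndexSets d).biUnion fun S => {gridCorner S, gridCorner Sᶜ}

lemma card_gridCorners_le : (gridCorners n).card ≤ 2 * d + 2 := by
  have hT : (cornerIndexSets d).card ≤ d + 1 :=
    (card_insert_le _ _).trans <| by
      simpa using card_image_le (s := (univ : Finset (Fin d))) (f := singleton)
  calc (gridCorners n).card ≤ (cornerIndexSets d).card * 2 :=
        card_biUnion_le_card_mul _ _ _ fun _ _ => card_le_two
    _ ≤ 2 * d + 2 := by omega

lemma l1Dist_gridCorner_eq_of_dist_eq {E F a b : ∀ i, Fin (n i)}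
    (h : ∀ x ∈ gridCorners n, (gridGraph n ⊔ SimpleGraph.fromEdgeSet {s(E, F)}).dist a x =
      (gridGraph n ⊔ SimpleGraph.fromEdgeSet {s(E, F)}).dist b x)
    {S : Finset (Fin d)} (hS : S ∈ cornerIndexSets d) :
    l1Dist a (gridCorner S) = l1Dist b (gridCorner S) := by
  have hmem (T : Finset (Fin d)) (hT : T = S ∨ T = Sᶜ) : gridCorner T ∈ gridCorners n :=
    mem_biUnion.mpr ⟨S, hS, by rcases hT with rfl | rfl <;> simp⟩
  simpa only [gridGraph_dist_eq] using
    gridGraph_connected.dist_eq_of_sup_fromEdgeSet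
      (fun u => by
        simp only [gridGraph_dist_eq, l1Dist_gridCorner_add_compl, l1Dist_gridCorner_compl])
      (h _ (hmem S (.inl rfl))) (h _ (hmem Sᶜ (.inr rfl)))

lemma resolves_gridCorners (E F : ∀ i, Fin (n i)) :
    resolves (gridGraph n ⊔ SimpleGraph.fromEdgeSet {s(E, F)}) (gridCorners n : Set _) := by
  intro a b hab
  by_contra! h
  refine hab (funext fun j => Fin.ext ?_)
  have hsum := l1Dist_gridCorner_eq_of_dist_eq h (mem_insert_self ∅ _)
  have hj := l1Dist_gridCorner_eq_of_dist_eq h (S := {j})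
    (mem_insert_of_mem (mem_image_of_mem _ (mem_univ j)))
  rw [l1Dist_gridCorner_empty, l1Dist_gridCorner_empty] at hsum
  have := l1Dist_gridCorner_singleton a j
  have := l1Dist_gridCorner_singleton b j
  omega

end Grid

theorem stmt_11_general {d : ℕ} (n : Fin d → ℕ)
    (E F : ∀ i, Fin (n i))
    (G' : SimpleGraph (∀ i, Fin (n i)))
    (hG' : G' = gridGraph n ⊔ SimpleGraph.fromEdgeSet {s(E, F)}) :
    metricDim G' ≤ 2 * d + 2 ∧
    Real.log (∏ i, (n i : ℝ)) / Real.log ((∑ i, (n i : ℝ)) - d + 1) ≤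
      (metricDim G' : ℝ) := by
  have : ∀ i, NeZero (n i) := fun i => NeZero.of_pos (E i).pos
  have hgrid : (gridGraph n).Connected := gridGraph_connected
  have hdiam (u v : ∀ i, Fin (n i)) : G'.dist u v ≤ ∑ i, (n i - 1) := by
    rw [hG', hgrid.dist_sup_fromEdgeSet, gridGraph_dist_eq]
    exact (min_le_left _ _).trans (l1Dist_le u v)
  have hcard := card_le_pow_metricDim (hG' ▸ hgrid.mono le_sup_left) hdiam
  simp only [Fintype.card_pi, Fintype.card_fin] at hcard
  refine ⟨hG' ▸ (metricDim_le_card (resolves_gridCorners E F)).trans card_gridCorners_le, ?_⟩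
  have hsum : (∑ i, (n i : ℝ)) - d + 1 = ((∑ i, (n i - 1) + 1 : ℕ) : ℝ) := by
    push_cast [Nat.cast_sub NeZero.one_le, Finset.sum_sub_distrib]
    simp
  rw [hsum, ← Nat.cast_prod]
  exact Real.log_div_log_le_of_le_pow hcard

/-- Theorem 3: for the `d`-dimensional grid `G` with an extra edge `e = (E,F)` added
between two non-adjacent vertices, `β(G') ≤ 2d + 2`; moreover the lower bound
`β(G') ≥ log(N_Π) / log(N_Σ − d + 1)` still holds. -/
theorem stmt_11 {d : ℕ} (n : Fin d → ℕ) (hn : ∀ i, 1 ≤ n i)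
    (E F : ∀ i, Fin (n i)) (hne : E ≠ F) (hadj : ¬ (gridGraph n).Adj E F)
    (G' : SimpleGraph (∀ i, Fin (n i)))
    (hG' : G' = gridGraph n ⊔ SimpleGraph.fromEdgeSet {s(E, F)}) :
    metricDim G' ≤ 2 * d + 2 ∧
    Real.log (∏ i, (n i : ℝ)) / Real.log ((∑ i, (n i : ℝ)) - d + 1) ≤
      (metricDim G' : ℝ) :=
  stmt_11_general n E F G' hG'
end

section
/- Let G be the m×n rectangle grid graph and let G' be G with an extra edge e between E = (x_E, y_E) and F = (x_F, y_F) satisfying: d_G(E,F) ≥ 2; x_F ≤ x_E, y_E ≤ y_F, x_E − x_F ≤ y_F − y_E; x_F ≠ x_E; Gain' ≥ 2; and neither E nor F lies on the boundary of the grid. If Gain' is even and x_E − x_F < Gain'/2 + 2, then the set {X = (1, β − 1), Y = (n, β − 1), Z = (1, α − 1)} is a resolving set of G', where α = (1 + y_F + y_E + x_F − x_E)/2 and β = (1 + y_F + y_E + x_E − x_F)/2. -/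
/-- The rectangle grid graph with `n` columns and `m` rows: the vertex `(i, j)`
(with `i : Fin n`, `j : Fin m`) represents the grid point in column `i + 1` and row
`j + 1`; two vertices are adjacent when they differ by exactly 1 in exactly one
coordinate, i.e. when their ℓ¹ distance is 1. -/
def grid2 (n m : ℕ) : SimpleGraph (Fin n × Fin m) where
  Adj a b := |((a.1 : ℕ) : ℤ) - ((b.1 : ℕ) : ℤ)| + |((a.2 : ℕ) : ℤ) - ((b.2 : ℕ) : ℤ)| = 1
  symm := by
    constructor
    intro a b h
    beta_reduce at h ⊢
    rw [abs_sub_comm ((b.1 : ℕ) : ℤ), abs_sub_comm ((b.2 : ℕ) : ℤ)]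
    exact h
  loopless := by constructor; intro a h; simp at h

/-- The (1-indexed) column coordinate of a grid vertex, as a rational number. -/
def Xc {n m : ℕ} (v : Fin n × Fin m) : ℚ := ((v.1 : ℕ) : ℚ) + 1

/-- The (1-indexed) row coordinate of a grid vertex, as a rational number. -/
def Yc {n m : ℕ} (v : Fin n × Fin m) : ℚ := ((v.2 : ℕ) : ℚ) + 1

/-- `v` lies on the boundary of the grid. -/
def onBoundary {n m : ℕ} (v : Fin n × Fin m) : Prop :=
  (v.1 : ℕ) = 0 ∨ (v.1 : ℕ) = n - 1 ∨ (v.2 : ℕ) = 0 ∨ (v.2 : ℕ) = m - 1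

/-!
In `G'` the distance is the minimum of the ℓ¹ distance and the two ℓ¹ routes through the new
edge. `Y` and `Z` are equidistant from `E` and `F` up to one, so the new edge never shortens a
path to them; for vertices in rows `≥ α − 1` the bound `x_E − x_F < Gain'/2 + 2` makes it useless
for reaching `X` too. Hence two vertices with equal distances to `X`, `Y`, `Z` coincide if both
lie in rows `≥ α − 1` (`X` and `Y` fix the column, `Z` the row), and also if both lie below
(`Y` and `Z` suffice). If `A` lies below row `α − 1` and `B` does not, `Y` and `Z` force
`B = (x_A − (β − α), α + β − 2 − y_A)`, which is strictly closer to `X` than `A` is.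
-/

namespace SimpleGraph

variable {V : Type*} {G : SimpleGraph V} {φ : V → ℕ} {b : V}

theorem le_length_of_adj_le (hb : φ b = 0) (hφ : ∀ u v, G.Adj u v → φ u ≤ φ v + 1)
    {a : V} (w : G.Walk a b) : φ a ≤ w.length := by
  induction w with
  | nil => simp [hb]
  | cons h _ ih => rw [Walk.length_cons]; exact (hφ _ _ h).trans (by omega)

theorem le_dist_of_adj_le (hb : φ b = 0) (hφ : ∀ u v, G.Adj u v → φ u ≤ φ v + 1)
    {a : V} (hr : G.Reachable a b) : φ a ≤ G.dist a b := by
  obtain ⟨w, hw⟩ := hr.exists_walk_length_eq_dist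
  exact hw ▸ le_length_of_adj_le hb hφ w

theorem exists_walk_length_le_of_descent (hφ : ∀ u, u ≠ b → ∃ v, G.Adj u v ∧ φ v + 1 = φ u)
    (a : V) : ∃ w : G.Walk a b, w.length ≤ φ a := by
  induction hk : φ a generalizing a with
  | zero =>
    by_cases hab : a = b
    · subst hab; exact ⟨.nil, le_rfl⟩
    · obtain ⟨v, -, hv⟩ := hφ a hab; omega
  | succ k ih =>
    by_cases hab : a = b
    · subst hab; exact ⟨.nil, by simp⟩
    · obtain ⟨v, hadj, hv⟩ := hφ a hab
      obtain ⟨w, hw⟩ := ih v (by omega)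
      exact ⟨.cons hadj w, by rw [Walk.length_cons]; omega⟩

theorem dist_eq_of_descent (hb : φ b = 0) (hφ : ∀ u v, G.Adj u v → φ u ≤ φ v + 1)
    (hdesc : ∀ u, u ≠ b → ∃ v, G.Adj u v ∧ φ v + 1 = φ u) (a : V) : G.dist a b = φ a := by
  obtain ⟨w, hw⟩ := exists_walk_length_le_of_descent hdesc a
  exact le_antisymm ((dist_le w).trans hw) (le_dist_of_adj_le hb hφ ⟨w⟩)

theorem Preconnected.dist_sup_edge (hG : G.Preconnected) (e f a b : V) :
    (G ⊔ fromEdgeSet {s(e, f)}).dist a b =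
      min (G.dist a b) (min (G.dist a e + 1 + G.dist f b) (G.dist a f + 1 + G.dist e b)) := by
  set G' := G ⊔ fromEdgeSet {s(e, f)}
  have hle : G ≤ G' := le_sup_left
  have hG' : G'.Preconnected := hG.mono hle
  have hef : G'.dist e f ≤ 1 := by
    by_cases h : e = f
    · simp [h]
    · exact (dist_eq_one_iff_adj.mpr (Or.inr (by simp [h]))).le
  have hanti : ∀ u v, G'.dist u v ≤ G.dist u v := fun u v => (hG u v).dist_anti hle
  have htri : ∀ u v w, G'.dist u w ≤ G'.dist u v + G'.dist v w :=
    fun u v w => (hG' u v).dist_triangle_left w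
  have hGtri : ∀ u v w, G.dist u w ≤ G.dist u v + G.dist v w :=
    fun u v w => (hG u v).dist_triangle_left w
  refine le_antisymm (le_min (hanti a b) (le_min ?_ ?_))
    (le_dist_of_adj_le (φ := fun u => min (G.dist u b)
      (min (G.dist u e + 1 + G.dist f b) (G.dist u f + 1 + G.dist e b))) (by simp) ?_ (hG' a b))
  · have := htri a e b; have := htri e f b; have := hanti a e; have := hanti f b
    omega
  · have := htri a f b; have := htri f e b; have := hanti a f; have := hanti e b
    rw [dist_comm] at hef
    omega
  · rintro u v (hadj | hadj)
    · have hu : ∀ x, G.dist u x ≤ G.dist v x + 1 := fun x => by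
        have := hGtri u v x; rw [dist_eq_one_iff_adj.mpr hadj] at this; omega
      have := hu b; have := hu e; have := hu f
      omega
    · rw [fromEdgeSet_adj, Set.mem_singleton_iff, Sym2.eq_iff] at hadj
      rcases hadj.1 with ⟨rfl, rfl⟩ | ⟨rfl, rfl⟩ <;> simp only [dist_self] <;> omega

end SimpleGraph

def l1 (u v : ℤ × ℤ) : ℕ := (u.1 - v.1).natAbs + (u.2 - v.2).natAbs

-- Coordinates are 0-indexed: the paper's vertex `(i, j)` has `gridPt = (i - 1, j - 1)`.
def gridPt {n m : ℕ} (v : Fin n × Fin m) : ℤ × ℤ := ((v.1 : ℕ), (v.2 : ℕ))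

theorem gridPt_injective {n m : ℕ} : Function.Injective (gridPt (n := n) (m := m)) := by
  intro a b h
  simp only [gridPt, Prod.mk.injEq, Nat.cast_inj] at h
  exact Prod.ext (Fin.ext h.1) (Fin.ext h.2)

theorem grid2_adj_iff {n m : ℕ} {a b : Fin n × Fin m} :
    (grid2 n m).Adj a b ↔ l1 (gridPt a) (gridPt b) = 1 := by
  show |_| + |_| = (1 : ℤ) ↔ _
  simp only [l1, gridPt, Int.abs_eq_natAbs]
  omega

theorem Fin.exists_step_toward {n : ℕ} {i j : Fin n} (h : i ≠ j) :
    ∃ k : Fin n, ((i : ℤ) - k).natAbs = 1 ∧ ((k : ℤ) - j).natAbs + 1 = ((i : ℤ) - j).natAbs := by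
  rcases Fin.lt_or_lt_of_ne h with hij | hij
  · exact ⟨⟨i + 1, by omega⟩, by simp only [Fin.lt_def] at hij; push_cast; omega⟩
  · exact ⟨⟨i - 1, by omega⟩, by simp only [Fin.lt_def] at hij; push_cast; omega⟩

theorem grid2_exists_adj_l1_succ {n m : ℕ} {a b : Fin n × Fin m} (h : a ≠ b) :
    ∃ c, (grid2 n m).Adj a c ∧ l1 (gridPt c) (gridPt b) + 1 = l1 (gridPt a) (gridPt b) := by
  simp only [grid2_adj_iff, l1, gridPt]
  by_cases h1 : a.1 = b.1
  · obtain ⟨k, hk⟩ := Fin.exists_step_toward fun h2 => h (Prod.ext h1 h2)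
    exact ⟨(a.1, k), by simp only [h1]; omega⟩
  · obtain ⟨k, hk⟩ := Fin.exists_step_toward h1
    exact ⟨(k, a.2), by dsimp only; omega⟩

theorem grid2_dist {n m : ℕ} (a b : Fin n × Fin m) :
    (grid2 n m).dist a b = l1 (gridPt a) (gridPt b) := by
  refine SimpleGraph.dist_eq_of_descent (by simp [l1]) (fun u v huv => ?_)
    (fun u hu => grid2_exists_adj_l1_succ hu) a
  rw [grid2_adj_iff] at huv
  simp only [l1] at huv ⊢
  omega

def l1Edge (e f u v : ℤ × ℤ) : ℕ :=
  min (l1 u v) (min (l1 u e + 1 + l1 f v) (l1 u f + 1 + l1 e v))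

theorem grid2_preconnected (n m : ℕ) : (grid2 n m).Preconnected := fun a b => by
  obtain ⟨w, -⟩ := SimpleGraph.exists_walk_length_le_of_descent
    (φ := fun u => l1 (gridPt u) (gridPt b)) (fun _ hu => grid2_exists_adj_l1_succ hu) a
  exact ⟨w⟩

theorem grid2_sup_edge_dist {n m : ℕ} (E F a b : Fin n × Fin m) :
    (grid2 n m ⊔ SimpleGraph.fromEdgeSet {s(E, F)}).dist a b =
      l1Edge (gridPt E) (gridPt F) (gridPt a) (gridPt b) := by
  simp only [(grid2_preconnected n m).dist_sup_edge, grid2_dist, l1Edge]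

theorem l1_triangle (u v w : ℤ × ℤ) : l1 u w ≤ l1 u v + l1 v w := by
  simp only [l1]; omega

theorem l1Edge_eq_l1 {e f v : ℤ × ℤ} (hef : l1 e v ≤ l1 f v + 1) (hfe : l1 f v ≤ l1 e v + 1)
    (u : ℤ × ℤ) : l1Edge e f u v = l1 u v := by
  have := l1_triangle u e v; have := l1_triangle u f v
  simp only [l1Edge]; omega

section Landmarks

/- With `e = gridPt E`, `f = gridPt F`, the landmarks are `X = (0, b)`, `Y = (N, b)` and
`Z = (0, a)`: `a = α - 2`, `b = β - 2` and `N = n - 1` in 0-indexed coordinates. -/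
variable {e f : ℤ × ℤ} {a b N : ℤ}

theorem l1Edge_eq_l1_of_le_snd {p : ℤ × ℤ} (hp : a ≤ p.2) (hfe : f.1 < e.1)
    (hab : b - a = e.1 - f.1) (hsum : e.2 + f.2 = a + b + 1) (hless : b - a ≤ a - e.2 + 1) :
    l1Edge e f p (0, b) = l1 p (0, b) := by
  simp only [l1Edge, l1]; omega

theorem l1_reflect_lt_l1Edge {p q : ℤ × ℤ} (hp : p.2 < a) (hq0 : 0 ≤ q.1)
    (hq1 : q.1 + (b - a) = p.1) (hq2 : p.2 + q.2 = a + b) (hfe : f.1 < e.1)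
    (hab : b - a = e.1 - f.1) (hsum : e.2 + f.2 = a + b + 1) :
    l1 q (0, b) < l1Edge e f p (0, b) := by
  simp only [l1Edge, lt_min_iff]
  simp only [l1]
  omega

theorem eq_of_l1Edge_landmarks_eq {p q : ℤ × ℤ} (hp0 : 0 ≤ p.1) (hpN : p.1 ≤ N)
    (hq0 : 0 ≤ q.1) (hqN : q.1 ≤ N) (hf : 0 ≤ f.1) (heN : e.1 ≤ N) (hfe : f.1 < e.1)
    (hab : b - a = e.1 - f.1) (hsum : e.2 + f.2 = a + b + 1)
    (hless : b - a ≤ a - e.2 + 1)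
    (hX : l1Edge e f p (0, b) = l1Edge e f q (0, b))
    (hY : l1Edge e f p (N, b) = l1Edge e f q (N, b))
    (hZ : l1Edge e f p (0, a) = l1Edge e f q (0, a)) : p = q := by
  have hYe : ∀ r, l1Edge e f r (N, b) = l1 r (N, b) :=
    l1Edge_eq_l1 (by simp only [l1]; omega) (by simp only [l1]; omega)
  have hZe : ∀ r, l1Edge e f r (0, a) = l1 r (0, a) :=
    l1Edge_eq_l1 (by simp only [l1]; omega) (by simp only [l1]; omega)
  rw [hYe, hYe] at hY
  rw [hZe, hZe] at hZ
  wlog hpq : p.2 ≤ q.2 generalizing p q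
  · exact (this hq0 hqN hp0 hpN hX.symm hY.symm hZ.symm (by omega)).symm
  rcases lt_or_ge q.2 a with hqa | hqa
  · simp only [l1] at hY hZ
    ext <;> omega
  rw [l1Edge_eq_l1_of_le_snd hqa hfe hab hsum hless] at hX
  rcases lt_or_ge p.2 a with hpa | hpa
  · simp only [l1] at hY hZ
    have hq1 : q.1 + (b - a) = p.1 := by omega
    have hq2 : p.2 + q.2 = a + b := by omega
    exact absurd hX (l1_reflect_lt_l1Edge hpa hq0 hq1 hq2 hfe hab hsum).ne'
  · rw [l1Edge_eq_l1_of_le_snd hpa hfe hab hsum hless] at hX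
    simp only [l1] at hX hY hZ
    ext <;> omega

end Landmarks

theorem stmt_19_general {m n : ℕ}
    (E F : Fin n × Fin m)
    (h1 : Xc F ≤ Xc E)
    (h4 : Xc F ≠ Xc E)
    (hless : Xc E - Xc F < ((Yc F - Yc E) - (Xc E - Xc F) - 1) / 2 + 2)
    (G' : SimpleGraph (Fin n × Fin m))
    (hG' : G' = grid2 n m ⊔ SimpleGraph.fromEdgeSet {s(E, F)})
    (X Y Z : Fin n × Fin m)
    (hX : Xc X = 1 ∧ Yc X = (1 + Yc F + Yc E + Xc E - Xc F) / 2 - 1)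
    (hY : Xc Y = n ∧ Yc Y = (1 + Yc F + Yc E + Xc E - Xc F) / 2 - 1)
    (hZ : Xc Z = 1 ∧ Yc Z = (1 + Yc F + Yc E + Xc F - Xc E) / 2 - 1) :
    resolves G' {X, Y, Z} := by
  have hFE : Xc F < Xc E := lt_of_le_of_ne h1 h4
  simp only [Xc, Yc] at hFE hless hX hY hZ
  have hX1 : ((X.1 : ℕ) : ℤ) = 0 := by qify; linarith
  have hZ1 : ((Z.1 : ℕ) : ℤ) = 0 := by qify; linarith
  have hY1 : ((Y.1 : ℕ) : ℤ) + 1 = n := by qify; linarith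
  have hYX : ((Y.2 : ℕ) : ℤ) = X.2 := by qify; linarith
  have hFE' : ((F.1 : ℕ) : ℤ) < E.1 := by qify; linarith
  have hb : 2 * ((X.2 : ℕ) : ℤ) = F.2 + E.2 + E.1 - F.1 - 1 := by qify; linarith
  have ha : 2 * ((Z.2 : ℕ) : ℤ) = F.2 + E.2 + F.1 - E.1 - 1 := by qify; linarith
  have hless' : 2 * ((E.1 : ℤ) - F.1) < F.2 - E.2 - (E.1 - F.1) + 3 := by qify; linarith
  have hXpt : gridPt X = (0, ((X.2 : ℕ) : ℤ)) := by simp only [gridPt, hX1]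
  have hYpt : gridPt Y = (((Y.1 : ℕ) : ℤ), ((X.2 : ℕ) : ℤ)) := by simp only [gridPt, hYX]
  have hZpt : gridPt Z = (0, ((Z.2 : ℕ) : ℤ)) := by simp only [gridPt, hZ1]
  intro A B hAB
  by_contra! hsame
  simp only [Set.mem_insert_iff, Set.mem_singleton_iff, forall_eq_or_imp, forall_eq, hG',
    grid2_sup_edge_dist, hXpt, hYpt, hZpt] at hsame
  have := A.1.isLt; have := B.1.isLt; have := E.1.isLt
  refine hAB (gridPt_injective (eq_of_l1Edge_landmarks_eq ?_ ?_ ?_ ?_ ?_ ?_ ?_ ?_ ?_ ?_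
    hsame.1 hsame.2.1 hsame.2.2))
  all_goals simp only [gridPt]; omega

/-- Lemma 6: under the symmetry-breaking and edge-case-removal assumptions, if
`Gain' = (y_F − y_E) − (x_E − x_F) − 1` is even and `x_E − x_F < Gain'/2 + 2`, then
with `α = (1 + y_F + y_E + x_F − x_E)/2` and `β = (1 + y_F + y_E + x_E − x_F)/2`,
the set `{X = (1, β − 1), Y = (n, β − 1), Z = (1, α − 1)}` is a resolving set
of `G'`. -/
theorem stmt_19 {m n : ℕ}
    (E F : Fin n × Fin m)
    (hdist : 2 ≤ (grid2 n m).dist E F)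
    (h1 : Xc F ≤ Xc E) (h2 : Yc E ≤ Yc F)
    (h3 : Xc E - Xc F ≤ Yc F - Yc E)
    (h4 : Xc F ≠ Xc E)
    (h5 : (2 : ℚ) ≤ (Yc F - Yc E) - (Xc E - Xc F) - 1)
    (h6 : ¬ onBoundary E) (h7 : ¬ onBoundary F)
    (heven : Even (((F.2 : ℕ) : ℤ) - ((E.2 : ℕ) : ℤ) - (((E.1 : ℕ) : ℤ) - ((F.1 : ℕ) : ℤ)) - 1))
    (hless : Xc E - Xc F < ((Yc F - Yc E) - (Xc E - Xc F) - 1) / 2 + 2)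
    (G' : SimpleGraph (Fin n × Fin m))
    (hG' : G' = grid2 n m ⊔ SimpleGraph.fromEdgeSet {s(E, F)})
    (X Y Z : Fin n × Fin m)
    (hX : Xc X = 1 ∧ Yc X = (1 + Yc F + Yc E + Xc E - Xc F) / 2 - 1)
    (hY : Xc Y = n ∧ Yc Y = (1 + Yc F + Yc E + Xc E - Xc F) / 2 - 1)
    (hZ : Xc Z = 1 ∧ Yc Z = (1 + Yc F + Yc E + Xc F - Xc E) / 2 - 1) :
    resolves G' {X, Y, Z} :=
  stmt_19_general E F h1 h4 hless G' hG' X Y Z hX hY hZ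
end
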